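/- Let u, u′ be two profinite trees over a ranked alphabet Σ with n variables, i.e. bidefinable natural families u_C, u′_C : Clone(F(Σ), C) → Clone(F(y_n), C) over locally finite clones. If u_{Endo(Q)} = u′_{Endo(Q)} for every finite set Q, then u = u′ (they agree at every locally finite clone C). -/
import Mathlib


/-- An abstract clone: a family of sets `C n` with variables and substitution
satisfying the unit and associativity laws. -/
structure CloneStr (C : ℕ → Type) : Type where
  v : ∀ n, Fin n → C n
  s : ∀ m n, C m → (Fin m → C n) → C n
  s_var : ∀ n (x : C n), s n n x (v n) = x
  var_s : ∀ m n (i : Fin m) (y : Fin m → C n), s m n (v m i) y = y i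
  s_assoc : ∀ l m n (x : C l) (y : Fin l → C m) (z : Fin m → C n),
      s m n (s l m x y) z = s l n x (fun i => s m n (y i) z)

/-- A bundled abstract clone. -/
structure BClone : Type 1 where
  C : ℕ → Type
  str : CloneStr C

/-- A clone morphism: a family of functions preserving variables and substitution. -/
structure BCloneHom (A B : BClone) : Type where
  f : ∀ n, A.C n → B.C n
  map_v : ∀ n (i : Fin n), f n (A.str.v n i) = B.str.v n i
  map_s : ∀ m n (x : A.C m) (y : Fin m → A.C n),
      f n (A.str.s m n x y) = B.str.s m n (f m x) (fun i => f n (y i))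

/-- Composition of clone morphisms. -/
def BCloneHom.comp {A B C : BClone} (g : BCloneHom B C) (h : BCloneHom A B) :
    BCloneHom A C where
  f n x := g.f n (h.f n x)
  map_v n i := by show g.f n (h.f n _) = _; rw [h.map_v, g.map_v]
  map_s m n x y := by show g.f n (h.f n _) = _; rw [h.map_s, g.map_s]

/-- A clone is locally finite if each of its arity sets is finite. -/
def LocFin (A : BClone) : Prop := ∀ n, Finite (A.C n)

/-- The endomorphism clone of a set `Q`: `Endo(Q)_n = (Q^n → Q)`, with variables the
projections and substitution by composition. -/
def EndoStr (Q : Type) : CloneStr (fun n => (Fin n → Q) → Q) where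
  v _ i g := g i
  s _ _ x y g := x fun i => y i g
  s_var _ _ := rfl
  var_s _ _ _ _ := rfl
  s_assoc _ _ _ _ _ _ := rfl

/-- The endomorphism clone of `Q`, bundled. -/
def EndoClone (Q : Type) : BClone := ⟨_, EndoStr Q⟩

/-- The Cayley clone morphism `cay^n : C → Endo(C_n)`, currying substitution. -/
def cayHom (A : BClone) (n : ℕ) : BCloneHom A (EndoClone (A.C n)) where
  f m x g := A.str.s m n x g
  map_v m i := by funext g; exact A.str.var_s m n i g
  map_s l m x y := by funext g; exact A.str.s_assoc l m n x y g

/-- two profinite trees over a ranked alphabet `Σ` with `n` variables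
(encoded, via `Clone(F(y_n), C) ≅ C_n`, as bidefinable natural families
`u_C : Clone(F(Σ), C) → C_n` over locally finite clones) that agree at every
endomorphism clone `Endo(Q)` of a finite set `Q` are equal at every locally
finite clone. -/
theorem profinite_trees_equal_of_agree_on_endo (l : ℕ) (ns : Fin l → ℕ) (Fsig : BClone)
    (e : ∀ B : BClone, BCloneHom Fsig B ≃ (∀ j : Fin l, B.C (ns j)))
    (hfree : ∀ (B B' : BClone) (φ : BCloneHom B B') (p : BCloneHom Fsig B),
      e B' (φ.comp p) = fun j => φ.f (ns j) (e B p j))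
    (n : ℕ)
    (u u' : ∀ B : BClone, BCloneHom Fsig B → B.C n)
    -- `u` and `u'` are natural:
    (hnat : ∀ (B B' : BClone), LocFin B → LocFin B' →
      ∀ (φ : BCloneHom B B') (p : BCloneHom Fsig B),
        φ.f n (u B p) = u B' (φ.comp p))
    (hnat' : ∀ (B B' : BClone), LocFin B → LocFin B' →
      ∀ (φ : BCloneHom B B') (p : BCloneHom Fsig B),
        φ.f n (u' B p) = u' B' (φ.comp p))
    -- `u` and `u'` are bidefinable:
    (hbi : ∀ B B' : BClone, LocFin B → LocFin B' → ∃ t : Fsig.C n,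
      (∀ p : BCloneHom Fsig B, u B p = p.f n t) ∧
      (∀ p' : BCloneHom Fsig B', u B' p' = p'.f n t))
    (hbi' : ∀ B B' : BClone, LocFin B → LocFin B' → ∃ t : Fsig.C n,
      (∀ p : BCloneHom Fsig B, u' B p = p.f n t) ∧
      (∀ p' : BCloneHom Fsig B', u' B' p' = p'.f n t))
    -- agreement at every endomorphism clone of a finite set:
    (hQ : ∀ (Q : Type), Finite Q →
      ∀ p : BCloneHom Fsig (EndoClone Q), u (EndoClone Q) p = u' (EndoClone Q) p) :
    ∀ (C : BClone), LocFin C → ∀ p : BCloneHom Fsig C, u C p = u' C p := by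
  intro C hC p
  have hCn : Finite (C.C n) := hC n
  have hE : LocFin (EndoClone (C.C n)) := by
    intro m
    show Finite ((Fin m → C.C n) → C.C n)
    infer_instance
  obtain ⟨t, ht1, ht2⟩ := hbi C (EndoClone (C.C n)) hC hE
  obtain ⟨t', ht1', ht2'⟩ := hbi' C (EndoClone (C.C n)) hC hE
  have hq := hQ (C.C n) hCn ((cayHom C n).comp p)
  rw [ht2, ht2'] at hq
  have key : C.str.s n n (p.f n t) (C.str.v n) = C.str.s n n (p.f n t') (C.str.v n) := by
    have := congrFun hq (C.str.v n)
    exact this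
  rw [ht1 p, ht1' p]
  rw [C.str.s_var, C.str.s_var] at key
  exact key
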